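/- Let n and r be integers with 3 < r < n, and set P = e_1 · e_{r−1}, a homogeneous polynomial of degree r in n variables. Then g ∈ GL_n(ℂ) satisfies P(g·x) = P(x) for all x ∈ ℂⁿ if and only if g satisfies e_r(g·x) = e_r(x) for all x ∈ ℂⁿ; that is, the stabilizer of e_1·e_{r−1} in GL_n(ℂ) equals the stabilizer of e_r. In particular, e_r is not the only homogeneous degree-r polynomial with stabilizer isomorphic to S_n ⋊ ℤ_r. -/

import Mathlib

/-- The `k`-th elementary symmetric polynomial in `n` variables, evaluated at `x : Fin n → ℂ`. -/
noncomputable def esymm (n k : ℕ) (x : Fin n → ℂ) : ℂ :=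
  ∑ I ∈ Finset.powersetCard k Finset.univ, ∏ i ∈ I, x i

/-!
If `g` rescales `e_k` with `3 ≤ k < n`, then `e_k ∘ g`, like `e_k`, has degree at most one in
each variable, so for every column `c` of `g` the polynomial `t ↦ e_k(y + t c)` has no `t²` term.
At `y` the indicator of a `(k - 2)`-set `S`, that coefficient is `e₂` of `c` restricted to the
complement of `S`; `e₂` vanishing on all sets of size `n - k + 2 ≥ 3` forces `c` to have a single
nonzero entry. So `g` is a monomial matrix, and evaluating `e_k` at indicator vectors shows that
`g` is a scalar `μ` times a permutation matrix. Such a `g` preserves `e_r`, and likewise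
`e₁ e_{r-1}`, exactly when `μ ^ r = 1`.

If `g` preserves `e₁ e_{r-1}`, it maps the hyperplane `e₁ = 0` into itself: otherwise `e_{r-1}`
would vanish on the hyperplane `g {e₁ = 0}`, which no `e_k` with `2 ≤ k < n` does. Hence
`e₁ ∘ g = c e₁`, cancelling `e₁` gives `e_{r-1} ∘ g = c⁻¹ e_{r-1}`, and the first paragraph
applies with `k = r - 1`. Finally, `e₁ e_{r-1} ≠ e_r` because at the all-ones vector
`n · C(n, r - 1) > C(n, r)`.
-/

open Finset Matrix Polynomial

lemma Nat.choose_lt_mul_choose_sub_one {n r : ℕ} (hr : 2 ≤ r) (hrn : r ≤ n) :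
    n.choose r < n * n.choose (r - 1) := by
  have hpascal := Nat.choose_succ_right_eq n (r - 1)
  rw [Nat.sub_add_cancel (by omega : 1 ≤ r)] at hpascal
  refine Nat.lt_of_mul_lt_mul_right (a := r) ?_
  rw [hpascal, mul_comm n, mul_assoc]
  exact Nat.mul_lt_mul_of_pos_left ((Nat.sub_le _ _).trans_lt (by nlinarith))
    (Nat.choose_pos (by omega))

@[to_additive]
lemma Finset.apply_eq_of_prod_eq_of_card_eq {ι M : Type*} [DecidableEq ι] [CancelCommMonoid M]
    {f : ι → M} {s : Finset ι} {m : ℕ} (hm : m ≠ 0) (hms : m < s.card)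
    (h : ∀ W ⊆ s, ∀ W' ⊆ s, W.card = m → W'.card = m → ∏ i ∈ W, f i = ∏ i ∈ W', f i)
    {i j : ι} (hi : i ∈ s) (hj : j ∈ s) : f i = f j := by
  rcases eq_or_ne i j with rfl | hij
  · rfl
  obtain ⟨A, hA, hAcard⟩ : ∃ A ⊆ s \ {i, j}, A.card = m - 1 := by
    refine exists_subset_card_eq ?_
    rw [card_sdiff_of_subset (by simp [insert_subset_iff, hi, hj]), card_pair hij]
    omega
  have hiA : i ∉ A := fun h => by simpa using hA h
  have hjA : j ∉ A := fun h => by simpa using hA h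
  have hAs : A ⊆ s := hA.trans sdiff_subset
  have := h (insert i A) (insert_subset hi hAs) (insert j A) (insert_subset hj hAs)
    (by rw [card_insert_of_notMem hiA]; omega) (by rw [card_insert_of_notMem hjA]; omega)
  rw [prod_insert hiA, prod_insert hjA] at this
  exact mul_right_cancel this

lemma dotProduct_ite_mem {ι R : Type*} [Fintype ι] [CommSemiring R] (a d : ι → R)
    (S : Finset ι) [DecidablePred (· ∈ S)] :
    a ⬝ᵥ (fun i => if i ∈ S then d i else 0) = ∑ i ∈ S, a i * d i := by
  simp [dotProduct, mul_ite]

section PairProducts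

variable {ι : Type*} [DecidableEq ι]

lemma two_mul_sum_powersetCard_two {R : Type*} [CommRing R] (c : ι → R) (D : Finset ι) :
    2 * ∑ U ∈ D.powersetCard 2, ∏ i ∈ U, c i = (∑ i ∈ D, c i) ^ 2 - ∑ i ∈ D, c i ^ 2 := by
  induction D using Finset.induction_on with
  | empty => rw [powersetCard_eq_empty.2 (by simp)]; simp
  | insert a s ha ih =>
    have hinj : Set.InjOn (insert a) (s.powersetCard 1 : Set (Finset ι)) := fun U hU V hV hUV => by
      have haU : a ∉ U := fun h => ha ((mem_powersetCard.1 hU).1 h)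
      have haV : a ∉ V := fun h => ha ((mem_powersetCard.1 hV).1 h)
      rw [← erase_insert haU, hUV, erase_insert haV]
    have hdisj : Disjoint (s.powersetCard 2) ((s.powersetCard 1).image (insert a)) := by
      refine disjoint_left.2 fun U hU hU' => ?_
      obtain ⟨V, -, rfl⟩ := mem_image.1 hU'
      exact ha ((mem_powersetCard.1 hU).1 (mem_insert_self a V))
    have hprod : ∀ U ∈ s.powersetCard 1, ∏ i ∈ insert a U, c i = c a * ∏ i ∈ U, c i :=
      fun U hU => prod_insert fun h => ha ((mem_powersetCard.1 hU).1 h)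
    rw [powersetCard_succ_insert ha, sum_union hdisj, sum_image hinj, sum_congr rfl hprod,
      ← mul_sum, powersetCard_one, sum_map, sum_insert ha, sum_insert ha]
    simp only [Function.Embedding.coeFn_mk, prod_singleton]
    linear_combination ih

variable {K : Type*} [Field K] [CharZero K] (c : ι → K)

lemma sq_sum_eq_sum_sq_of_card_eq_succ {p : ℕ} (hp : 2 ≤ p)
    (h : ∀ D : Finset ι, D.card = p → (∑ i ∈ D, c i) ^ 2 = ∑ i ∈ D, c i ^ 2)
    (D : Finset ι) (hD : D.card = p + 1) : (∑ i ∈ D, c i) ^ 2 = ∑ i ∈ D, c i ^ 2 := by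
  set S := ∑ i ∈ D, c i
  set Q := ∑ i ∈ D, c i ^ 2
  have herase : ∀ a ∈ D, (S - c a) ^ 2 = Q - c a ^ 2 := fun a ha => by
    rw [← sum_erase_eq_sub ha, ← sum_erase_eq_sub ha]
    exact h _ (by rw [card_erase_of_mem ha, hD, Nat.add_sub_cancel])
  -- summing `herase` over `a ∈ D` gives `(p - 1) S² = (p - 1) Q`
  have hsum := sum_congr rfl herase
  simp only [sub_sq, sum_add_distrib, sum_sub_distrib, sum_const, hD, ← mul_sum,
    nsmul_eq_mul] at hsum
  have hp1 : ((p : K) - 1) ≠ 0 := by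
    rw [sub_ne_zero]; exact_mod_cast (by omega : p ≠ 1)
  refine mul_left_cancel₀ hp1 ?_
  push_cast at hsum
  linear_combination hsum

lemma sq_sum_eq_sum_sq_of_le_card {p : ℕ} (hp : 2 ≤ p)
    (h : ∀ D : Finset ι, D.card = p → (∑ i ∈ D, c i) ^ 2 = ∑ i ∈ D, c i ^ 2)
    (D : Finset ι) (hD : p ≤ D.card) : (∑ i ∈ D, c i) ^ 2 = ∑ i ∈ D, c i ^ 2 := by
  obtain ⟨q, hq⟩ : ∃ q, D.card = q := ⟨_, rfl⟩
  rw [hq] at hD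
  induction q, hD using Nat.le_induction generalizing D with
  | base => exact h D hq
  | succ q hpq ih => exact sq_sum_eq_sum_sq_of_card_eq_succ c (hp.trans hpq) ih D hq

lemma mul_eq_zero_of_sq_sum_eq_sum_sq [Fintype ι]
    (h : ∀ D : Finset ι, Fintype.card ι - 1 ≤ D.card → (∑ i ∈ D, c i) ^ 2 = ∑ i ∈ D, c i ^ 2)
    {a b : ι} (hab : a ≠ b) : c a * c b = 0 := by
  classical
  set S := ∑ i, c i
  have hS := h univ (by simp)
  have hval : ∀ i, c i = 0 ∨ c i = S := fun i => by
    have hi := h (univ.erase i) (by simp)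
    rw [sum_erase_eq_sub (mem_univ i), sum_erase_eq_sub (mem_univ i)] at hi
    have : c i * (c i - S) = 0 := by linear_combination (hi - hS) / 2
    exact (mul_eq_zero.1 this).imp id sub_eq_zero.1
  by_contra hne
  obtain ⟨ha, hb⟩ := mul_ne_zero_iff.1 hne
  have hS0 : S ≠ 0 := (hval a).resolve_left ha ▸ ha
  -- every nonzero `c i` equals `S`, so `S = #{i | c i ≠ 0} • S` and the support is a singleton
  have hcount : ((univ.filter fun i => c i ≠ 0).card : K) * S = 1 * S := by
    rw [one_mul, ← nsmul_eq_mul, ← sum_const]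
    conv_rhs => rw [show S = ∑ i, c i from rfl, ← sum_filter_ne_zero]
    exact sum_congr rfl fun i hi => ((hval i).resolve_left (mem_filter.1 hi).2).symm
  have hone : (univ.filter fun i => c i ≠ 0).card = 1 := by
    exact_mod_cast mul_right_cancel₀ hS0 hcount
  exact hab (card_le_one.1 hone.le a (by simpa using ha) b (by simpa using hb))

lemma mul_eq_zero_of_sum_powersetCard_two_eq_zero [Fintype ι] {p : ℕ} (hp : 2 ≤ p)
    (hpn : p < Fintype.card ι)
    (h : ∀ D : Finset ι, D.card = p → ∑ U ∈ D.powersetCard 2, ∏ i ∈ U, c i = 0)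
    {a b : ι} (hab : a ≠ b) : c a * c b = 0 := by
  refine mul_eq_zero_of_sq_sum_eq_sum_sq c (fun D hD => ?_) hab
  refine sq_sum_eq_sum_sq_of_le_card c (p := p) (by omega) (fun D' hD' => ?_) D (by omega)
  rw [← sub_eq_zero, ← two_mul_sum_powersetCard_two, h D' hD', mul_zero]

end PairProducts

lemma Matrix.exists_perm_mulVec_eq_mul_comp {ι R : Type*} [Fintype ι] [DecidableEq ι]
    [CommRing R] [IsDomain R] {g : Matrix ι ι R} (hg : IsUnit g)
    (hcol : ∀ j a b, a ≠ b → g a j * g b j = 0) :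
    ∃ (σ : Equiv.Perm ι) (d : ι → R), (∀ i, d i ≠ 0) ∧ ∀ x, g *ᵥ x = d * (x ∘ σ) := by
  have hdet : g.det ≠ 0 := ((isUnit_iff_isUnit_det g).1 hg).ne_zero
  have hcol_ne : ∀ j, ∃ i, g i j ≠ 0 := fun j => by
    by_contra! h
    exact hdet (det_eq_zero_of_column_eq_zero j h)
  choose r hr using hcol_ne
  have hsupp : ∀ i j, g i j ≠ 0 → i = r j := fun i j hij => by
    by_contra hne
    exact mul_ne_zero hij (hr j) (hcol j i (r j) hne)
  have hr_surj : Function.Surjective r := fun i => by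
    obtain ⟨j, hj⟩ : ∃ j, g i j ≠ 0 := by
      by_contra! h
      exact hdet (det_eq_zero_of_row_eq_zero i h)
    exact ⟨j, (hsupp i j hj).symm⟩
  let σ := (Equiv.ofBijective r ⟨Finite.injective_iff_surjective.2 hr_surj, hr_surj⟩).symm
  have hσ : ∀ i, r (σ i) = i := (Equiv.ofBijective r _).apply_symm_apply
  have hσ' : ∀ j, σ (r j) = j := (Equiv.ofBijective r _).symm_apply_apply
  refine ⟨σ, fun i => g i (σ i), fun i => by simpa only [hσ] using hr (σ i),
    fun x => funext fun i => ?_⟩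
  refine (sum_eq_single (σ i) (fun j _ hj => ?_) (by simp)).trans rfl
  have hij : g i j = 0 := by
    by_contra h
    exact hj (by rw [hsupp i j h, hσ'])
  simp [hij]

section Esymm

variable {n : ℕ}

lemma esymm_one (x : Fin n → ℂ) : esymm n 1 x = ∑ i, x i := by
  simp [esymm, powersetCard_one]

lemma esymm_apply_one (k : ℕ) : esymm n k 1 = n.choose k := by
  simp [esymm]

lemma esymm_apply_one_ne_zero {k : ℕ} (hk : k ≤ n) : esymm n k 1 ≠ 0 := by
  rw [esymm_apply_one]
  exact_mod_cast (Nat.choose_pos hk).ne'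

lemma esymm_one_add_smul (y c : Fin n → ℂ) (t : ℂ) :
    esymm n 1 (y + t • c) = esymm n 1 y + t * esymm n 1 c := by
  simp [esymm_one, sum_add_distrib, mul_sum]

lemma esymm_smul (k : ℕ) (μ : ℂ) (x : Fin n → ℂ) : esymm n k (μ • x) = μ ^ k * esymm n k x := by
  simp only [esymm, mul_sum, Pi.smul_apply, smul_eq_mul, prod_mul_distrib, prod_const]
  refine sum_congr rfl fun T hT => ?_
  rw [(mem_powersetCard.1 hT).2]

lemma esymm_comp_perm (k : ℕ) (σ : Equiv.Perm (Fin n)) (x : Fin n → ℂ) :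
    esymm n k (x ∘ σ) = esymm n k x := by
  conv_rhs => rw [esymm, ← map_univ_equiv σ, powersetCard_map, sum_map]
  simp [esymm, prod_map]

lemma esymm_smul_comp_perm (k : ℕ) (μ : ℂ) (σ : Equiv.Perm (Fin n)) (x : Fin n → ℂ) :
    esymm n k (μ • (x ∘ σ)) = μ ^ k * esymm n k x := by
  rw [esymm_smul, esymm_comp_perm]

lemma forall_esymm_smul_comp_perm_eq_iff {k : ℕ} (hk : k ≤ n) {μ : ℂ}
    {σ : Equiv.Perm (Fin n)} :
    (∀ x, esymm n k (μ • (x ∘ σ)) = esymm n k x) ↔ μ ^ k = 1 := by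
  simp only [esymm_smul_comp_perm]
  exact ⟨fun h => mul_right_cancel₀ (esymm_apply_one_ne_zero hk) ((h 1).trans (one_mul _).symm),
    fun h x => by rw [h, one_mul]⟩

lemma forall_esymm_one_mul_esymm_smul_comp_perm_eq_iff {k : ℕ} (hn : 1 ≤ n) (hk : k ≤ n) {μ : ℂ}
    {σ : Equiv.Perm (Fin n)} :
    (∀ x, esymm n 1 (μ • (x ∘ σ)) * esymm n k (μ • (x ∘ σ)) = esymm n 1 x * esymm n k x) ↔
      μ ^ (k + 1) = 1 := by
  have hmul : ∀ a b : ℂ, μ ^ 1 * a * (μ ^ k * b) = μ ^ (k + 1) * (a * b) := fun a b => by ring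
  simp only [esymm_smul_comp_perm, hmul]
  have h1 := mul_ne_zero (esymm_apply_one_ne_zero hn) (esymm_apply_one_ne_zero hk)
  exact ⟨fun h => mul_right_cancel₀ h1 ((h 1).trans (one_mul _).symm),
    fun h x => by rw [h, one_mul]⟩

lemma esymm_ite_mem (k : ℕ) (W : Finset (Fin n)) (d : Fin n → ℂ) :
    esymm n k (fun i => if i ∈ W then d i else 0) = ∑ T ∈ W.powersetCard k, ∏ i ∈ T, d i := by
  have hW : W.powersetCard k = (powersetCard k univ).filter (· ⊆ W) := by
    ext T; simp [and_comm]
  simp only [esymm, prod_ite_zero, hW, sum_filter]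
  rfl

lemma esymm_ite_mem_of_card_eq {k : ℕ} {W : Finset (Fin n)} (hW : W.card = k) (d : Fin n → ℂ) :
    esymm n k (fun i => if i ∈ W then d i else 0) = ∏ i ∈ W, d i := by
  rw [esymm_ite_mem, ← hW, powersetCard_self, sum_singleton]

noncomputable def esymmLine (k : ℕ) (y c : Fin n → ℂ) : ℂ[X] :=
  ∑ T ∈ powersetCard k univ, ∑ U ∈ T.powerset, C ((∏ i ∈ U, c i) * ∏ i ∈ T \ U, y i) * X ^ U.card

lemma eval_esymmLine (k : ℕ) (y c : Fin n → ℂ) (t : ℂ) :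
    (esymmLine k y c).eval t = esymm n k (y + t • c) := by
  simp only [esymmLine, esymm, eval_finsetSum, eval_mul, eval_C, eval_pow, eval_X]
  refine sum_congr rfl fun T _ => ?_
  simp only [Pi.add_apply, Pi.smul_apply, smul_eq_mul, add_comm (y _), prod_add,
    prod_mul_distrib, prod_const]
  exact sum_congr rfl fun U _ => by ring

lemma coeff_esymmLine (k : ℕ) (y c : Fin n → ℂ) (m : ℕ) :
    (esymmLine k y c).coeff m =
      ∑ T ∈ powersetCard k univ, ∑ U ∈ T.powersetCard m, (∏ i ∈ U, c i) * ∏ i ∈ T \ U, y i := by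
  simp only [esymmLine, finsetSum_coeff, coeff_C_mul_X_pow]
  refine sum_congr rfl fun T _ => ?_
  rw [powersetCard_eq_filter, sum_filter]
  simp only [eq_comm]

lemma mul_esymm_eq_of_forall_ne {k : ℕ} {y c y' c' : Fin n → ℂ} {a t₀ : ℂ}
    (h : ∀ t ≠ t₀, a * esymm n k (y + t • c) = esymm n k (y' + t • c')) :
    a * esymm n k y = esymm n k y' := by
  have hline : C a * esymmLine k y c = esymmLine k y' c' := by
    refine eq_of_infinite_eval_eq _ _ ((Set.finite_singleton t₀).infinite_compl.mono ?_)
    intro t ht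
    simpa [eval_esymmLine] using h t ht
  simpa [eval_esymmLine] using congrArg (eval 0) hline

lemma coeff_two_esymmLine_single (k : ℕ) (x : Fin n → ℂ) (j : Fin n) :
    (esymmLine k x (Pi.single j 1)).coeff 2 = 0 := by
  rw [coeff_esymmLine]
  refine sum_eq_zero fun T _ => sum_eq_zero fun U hU => ?_
  obtain ⟨i, hiU, hij⟩ := exists_mem_ne (by rw [(mem_powersetCard.1 hU).2]; norm_num) j
  rw [prod_eq_zero hiU (Pi.single_eq_of_ne hij 1), zero_mul]

lemma coeff_two_esymmLine_ite_mem {k : ℕ} {S : Finset (Fin n)} (hS : S.card + 2 = k)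
    (c : Fin n → ℂ) :
    (esymmLine k (fun i => if i ∈ S then 1 else 0) c).coeff 2 =
      ∑ U ∈ Sᶜ.powersetCard 2, ∏ i ∈ U, c i := by
  have hT : ∀ T ∈ powersetCard k univ,
      ∑ U ∈ T.powersetCard 2, (∏ i ∈ U, c i) * ∏ i ∈ T \ U, (if i ∈ S then (1 : ℂ) else 0) =
        if S ⊆ T then ∏ i ∈ T \ S, c i else 0 := by
    intro T hT
    have hTk := (mem_powersetCard.1 hT).2
    have key : ∀ U ∈ T.powersetCard 2, (T \ U ⊆ S ↔ S ⊆ T ∧ T \ S = U) := fun U hU => by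
      obtain ⟨hUT, hU2⟩ := mem_powersetCard.1 hU
      constructor
      · intro hsub
        have hTU : T \ U = S :=
          eq_of_subset_of_card_le hsub (by rw [card_sdiff_of_subset hUT]; omega)
        exact ⟨hTU ▸ sdiff_subset, hTU ▸ Finset.sdiff_sdiff_eq_self hUT⟩
      · rintro ⟨hST, rfl⟩
        rw [Finset.sdiff_sdiff_eq_self hST]
    simp only [prod_boole, mul_ite, mul_one, mul_zero]
    have hcond : ∀ U ∈ T.powersetCard 2, (if ∀ i ∈ T \ U, i ∈ S then ∏ i ∈ U, c i else 0) =
        if S ⊆ T ∧ T \ S = U then ∏ i ∈ U, c i else 0 := fun U hU => if_congr (key U hU) rfl rfl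
    rw [sum_congr rfl hcond]
    split_ifs with hST
    · simp only [hST, true_and, sum_ite_eq]
      rw [if_pos (mem_powersetCard.2 ⟨sdiff_subset, by rw [card_sdiff_of_subset hST]; omega⟩)]
    · simp [hST]
  have hdisj : ∀ U ∈ (univ \ S).powersetCard (k - S.card), Disjoint U S := fun U hU =>
    disjoint_of_subset_left (mem_powersetCard.1 hU).1 sdiff_disjoint
  rw [coeff_esymmLine, sum_congr rfl hT, ← sum_filter,
    filter_powersetCard_subset S univ k (subset_univ S) (by omega),
    sum_image fun U hU V hV hUV => by
      rw [← union_sdiff_cancel_right (hdisj U hU), hUV, union_sdiff_cancel_right (hdisj V hV)],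
    sum_congr rfl fun U hU => by rw [union_sdiff_cancel_right (hdisj U hU)],
    ← compl_eq_univ_sdiff, show k - S.card = 2 by omega]

end Esymm

section Monomial

variable {n k : ℕ} {g : Matrix (Fin n) (Fin n) ℂ} {a : ℂ}

lemma sum_powersetCard_two_col_eq_zero (hg : IsUnit g)
    (h : ∀ x, esymm n k (g *ᵥ x) = a * esymm n k x) (j : Fin n) {S : Finset (Fin n)}
    (hS : S.card + 2 = k) : ∑ U ∈ Sᶜ.powersetCard 2, ∏ i ∈ U, g i j = 0 := by
  obtain ⟨x, hx⟩ : ∃ x, g *ᵥ x = fun i => if i ∈ S then 1 else 0 :=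
    ⟨g⁻¹ *ᵥ _, by rw [mulVec_mulVec, mul_nonsing_inv _ ((isUnit_iff_isUnit_det g).1 hg),
      one_mulVec]⟩
  -- `e_k ∘ g` is affine along coordinate lines, so `e_k` has no `t²` term along `g`'s columns
  have hline : esymmLine k (g *ᵥ x) (g *ᵥ Pi.single j 1) = C a * esymmLine k x (Pi.single j 1) :=
    Polynomial.funext fun t => by
      simp only [eval_mul, eval_C, eval_esymmLine, ← h, mulVec_add, mulVec_smul]
  simpa only [coeff_C_mul, coeff_two_esymmLine_single, mul_zero, hx, mulVec_single_one,
    coeff_two_esymmLine_ite_mem hS, col_apply] using congrArg (coeff · 2) hline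

lemma mul_col_eq_zero_of_esymm_mulVec_eq_mul (hk : 3 ≤ k) (hkn : k < n) (hg : IsUnit g)
    (h : ∀ x, esymm n k (g *ᵥ x) = a * esymm n k x) (j : Fin n) {i i' : Fin n} (hii' : i ≠ i') :
    g i j * g i' j = 0 := by
  refine mul_eq_zero_of_sum_powersetCard_two_eq_zero (fun i => g i j) (p := n - k + 2) (by omega)
    (by simp; omega) (fun D hD => ?_) hii'
  simpa using sum_powersetCard_two_col_eq_zero hg h j (S := Dᶜ) (by simp [card_compl, hD]; omega)

theorem exists_perm_of_esymm_mulVec_eq_mul (hk : 3 ≤ k) (hkn : k < n) (hg : IsUnit g)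
    (h : ∀ x, esymm n k (g *ᵥ x) = a * esymm n k x) :
    ∃ (μ : ℂ) (σ : Equiv.Perm (Fin n)), ∀ x, g *ᵥ x = μ • (x ∘ σ) := by
  obtain ⟨σ, d, hd, hgd⟩ :=
    exists_perm_mulVec_eq_mul_comp hg fun j _ _ =>
      mul_col_eq_zero_of_esymm_mulVec_eq_mul hk hkn hg h j
  have hprod : ∀ W : Finset (Fin n), W.card = k → ∏ i ∈ W, d i = a := fun W hW => by
    have hdW : (d * fun i => if i ∈ W then 1 else 0) = fun i => if i ∈ W then d i else 0 := by
      ext i; simp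
    have := h ((fun i => if i ∈ W then 1 else 0) ∘ σ.symm)
    rwa [hgd, Function.comp_assoc, Equiv.symm_comp_self, Function.comp_id, esymm_comp_perm, hdW,
      esymm_ite_mem_of_card_eq hW, esymm_ite_mem_of_card_eq hW (fun _ => 1), prod_const_one,
      mul_one] at this
  have hconst : ∀ i i', d i = d i' := fun i i' => by
    let u : Fin n → ℂˣ := fun i => Units.mk0 (d i) (hd i)
    have := apply_eq_of_prod_eq_of_card_eq (f := u) (s := univ) (m := k) (by omega) (by simpa)
      (fun W _ W' _ hW hW' => Units.ext (by simp [u, hprod W hW, hprod W' hW']))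
      (mem_univ i) (mem_univ i')
    simpa [u] using this
  refine ⟨d ⟨0, by omega⟩, σ, fun x => ?_⟩
  rw [hgd]
  ext i
  simp [hconst i ⟨0, by omega⟩]

end Monomial

section Hyperplane

variable {n k : ℕ}

theorem exists_dotProduct_eq_zero_esymm_ne_zero (hk : 2 ≤ k) (hkn : k < n) {a : Fin n → ℂ}
    (ha : a ≠ 0) : ∃ x, a ⬝ᵥ x = 0 ∧ esymm n k x ≠ 0 := by
  -- the witnesses are supported on `k` coordinates, where `e_k` is the product of the entries
  obtain ⟨p, hp⟩ : ∃ p, a p ≠ 0 := Function.ne_iff.1 ha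
  by_cases hB : ∃ B ⊆ univ.erase p, B.card = k - 1 ∧ ∑ i ∈ B, a i ≠ 0
  · obtain ⟨B, hBp, hBk, hBa⟩ := hB
    have hpB : p ∉ B := fun h => by simpa using hBp h
    set t := -(∑ i ∈ B, a i) / a p
    have hd : ∀ i ∈ B, (if i = p then t else 1) = 1 := fun i hi =>
      if_neg (ne_of_mem_of_not_mem hi hpB)
    refine ⟨fun i => if i ∈ insert p B then (if i = p then t else 1) else 0, ?_, ?_⟩
    · rw [dotProduct_ite_mem, sum_insert hpB, sum_congr rfl fun i hi => by rw [hd i hi, mul_one],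
        if_pos rfl]
      simp only [t]
      field_simp
      ring
    · rw [esymm_ite_mem_of_card_eq (by rw [card_insert_of_notMem hpB]; omega), prod_insert hpB,
        prod_congr rfl hd, prod_const_one, mul_one, if_pos rfl]
      exact div_ne_zero (neg_ne_zero.2 hBa) hp
  · push Not at hB
    have hconst : ∀ i ∈ univ.erase p, ∀ j ∈ univ.erase p, a i = a j := fun i hi j hj =>
      apply_eq_of_sum_eq_of_card_eq (m := k - 1) (by omega) (by simp; omega)
        (fun W hW W' hW' hc hc' => by rw [hB W hW hc, hB W' hW' hc']) hi hj
    obtain ⟨B, hBp, hBk⟩ := exists_subset_card_eq (s := univ.erase p) (n := k - 1) (by simp; omega)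
    have hzero : ∀ i ∈ univ.erase p, a i = 0 := fun i hi => by
      have hsum := hB B hBp hBk
      rw [sum_congr rfl fun j hj => hconst j (hBp hj) i hi, sum_const, hBk, nsmul_eq_mul] at hsum
      exact (mul_eq_zero.1 hsum).resolve_left (by norm_cast; omega)
    obtain ⟨S, hSp, hSk⟩ := exists_subset_card_eq (s := univ.erase p) (n := k) (by simp; omega)
    refine ⟨fun i => if i ∈ S then 1 else 0, ?_, ?_⟩
    · rw [dotProduct_ite_mem]
      exact sum_eq_zero fun i hi => by rw [hzero i (hSp hi), zero_mul]
    · rw [esymm_ite_mem_of_card_eq hSk (fun _ => 1), prod_const_one]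
      exact one_ne_zero

end Hyperplane

section ProductStabilizer

variable {n k : ℕ} {g : Matrix (Fin n) (Fin n) ℂ}

lemma esymm_one_mulVec_eq_zero_of_esymm_one_eq_zero (hk : 2 ≤ k) (hkn : k < n) (hg : IsUnit g)
    (hP : ∀ x, esymm n 1 (g *ᵥ x) * esymm n k (g *ᵥ x) = esymm n 1 x * esymm n k x)
    {v : Fin n → ℂ} (hv : esymm n 1 v = 0) : esymm n 1 (g *ᵥ v) = 0 := by
  have hdet := (isUnit_iff_isUnit_det g).1 hg
  by_contra hgv
  -- on the line `u + t v` inside `{e₁ = 0}`, the factor `e₁ ∘ g` vanishes for one `t` only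
  have hvanish : ∀ u, esymm n 1 u = 0 → esymm n k (g *ᵥ u) = 0 := fun u hu => by
    have hline : ∀ t ≠ -esymm n 1 (g *ᵥ u) / esymm n 1 (g *ᵥ v),
        0 * esymm n k (g *ᵥ u + t • (g *ᵥ v)) = esymm n k (g *ᵥ u + t • (g *ᵥ v)) := fun t ht => by
      have hPt := hP (u + t • v)
      rw [esymm_one_add_smul u, hu, hv, mul_zero, add_zero, zero_mul, mulVec_add, mulVec_smul,
        esymm_one_add_smul] at hPt
      rw [zero_mul, eq_comm]
      refine (mul_eq_zero.1 hPt).resolve_left fun h0 => ht ?_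
      rw [eq_div_iff hgv]
      linear_combination h0
    simpa using (mul_esymm_eq_of_forall_ne hline).symm
  have hℓ : 1 ᵥ* g⁻¹ ≠ 0 := fun h0 => by
    have := congrArg (· ⬝ᵥ (g *ᵥ 1)) h0
    simp only [← dotProduct_mulVec, mulVec_mulVec, nonsing_inv_mul g hdet, one_mulVec,
      one_dotProduct_one, zero_dotProduct, Fintype.card_fin, Nat.cast_eq_zero] at this
    omega
  obtain ⟨y, hy, hyk⟩ := exists_dotProduct_eq_zero_esymm_ne_zero hk hkn hℓ
  refine hyk ?_
  have := hvanish (g⁻¹ *ᵥ y) (by rwa [esymm_one, ← one_dotProduct, dotProduct_mulVec])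
  rwa [mulVec_mulVec, mul_nonsing_inv g hdet, one_mulVec] at this

lemma exists_esymm_one_mulVec_eq_mul (hn : n ≠ 0)
    (h : ∀ v, esymm n 1 v = 0 → esymm n 1 (g *ᵥ v) = 0) :
    ∃ c, ∀ x, esymm n 1 (g *ᵥ x) = c * esymm n 1 x := by
  have hb : ∀ x, esymm n 1 (g *ᵥ x) = (1 ᵥ* g) ⬝ᵥ x := fun x => by
    rw [esymm_one, ← one_dotProduct, dotProduct_mulVec]
  have hconst : ∀ i j, (1 ᵥ* g) i = (1 ᵥ* g) j := fun i j => by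
    have := h (Pi.single i 1 - Pi.single j 1) (by simp [esymm_one, sum_sub_distrib])
    rwa [hb, dotProduct_sub, dotProduct_single_one, dotProduct_single_one, sub_eq_zero] at this
  refine ⟨(1 ᵥ* g) ⟨0, by omega⟩, fun x => ?_⟩
  simp only [hb, dotProduct, esymm_one, mul_sum]
  exact sum_congr rfl fun i _ => by rw [hconst i]

lemma mul_esymm_mulVec_eq_of_esymm_one_mulVec_eq_mul (hn : n ≠ 0)
    (hP : ∀ x, esymm n 1 (g *ᵥ x) * esymm n k (g *ᵥ x) = esymm n 1 x * esymm n k x) {c : ℂ}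
    (hc : ∀ x, esymm n 1 (g *ᵥ x) = c * esymm n 1 x) (x : Fin n → ℂ) :
    c * esymm n k (g *ᵥ x) = esymm n k x := by
  -- cancel `e₁` along the line `x + t 1`, where it vanishes for one `t` only
  refine mul_esymm_eq_of_forall_ne (c := g *ᵥ 1) (c' := 1) (t₀ := -esymm n 1 x / n) fun t ht => ?_
  have h1 : esymm n 1 (x + t • 1) ≠ 0 := fun h0 => ht (by
    rw [esymm_one_add_smul, esymm_apply_one, Nat.choose_one_right] at h0
    rw [eq_div_iff (by exact_mod_cast hn)]
    linear_combination h0)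
  have hline := hP (x + t • 1)
  rw [hc, mulVec_add, mulVec_smul] at hline
  exact mul_left_cancel₀ h1 (by linear_combination hline)

theorem exists_perm_of_esymm_one_mul_esymm_mulVec (hk : 3 ≤ k) (hkn : k < n) (hg : IsUnit g)
    (hP : ∀ x, esymm n 1 (g *ᵥ x) * esymm n k (g *ᵥ x) = esymm n 1 x * esymm n k x) :
    ∃ (μ : ℂ) (σ : Equiv.Perm (Fin n)), ∀ x, g *ᵥ x = μ • (x ∘ σ) := by
  obtain ⟨c, hc⟩ := exists_esymm_one_mulVec_eq_mul (by omega) fun v hv =>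
    esymm_one_mulVec_eq_zero_of_esymm_one_eq_zero (by omega) hkn hg hP hv
  have hck := mul_esymm_mulVec_eq_of_esymm_one_mulVec_eq_mul (by omega) hP hc
  have hc0 : c ≠ 0 := fun h0 => esymm_apply_one_ne_zero hkn.le (by simpa [h0] using (hck 1).symm)
  exact exists_perm_of_esymm_mulVec_eq_mul hk hkn hg (a := c⁻¹) fun x => by
    rw [← hck x, inv_mul_cancel_left₀ hc0]

end ProductStabilizer

/-- Let `3 < r < n` and `P = e₁ · e_{r-1}`, a homogeneous polynomial of
degree `r`. Then `g ∈ GLₙ(ℂ)` preserves `P` if and only if it preserves `e_r`; i.e. the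
stabilizer of `e₁ · e_{r-1}` equals the stabilizer of `e_r`. In particular (since
`e₁ · e_{r-1} ≠ e_r`), `e_r` is not the only homogeneous degree-`r` polynomial with this
stabilizer. -/
theorem stabilizer_of_product (n r : ℕ) (hr : 3 < r) (hrn : r < n) :
    (∀ g : Matrix (Fin n) (Fin n) ℂ, IsUnit g →
      ((∀ x : Fin n → ℂ,
          esymm n 1 (g.mulVec x) * esymm n (r - 1) (g.mulVec x) =
            esymm n 1 x * esymm n (r - 1) x) ↔
        (∀ x : Fin n → ℂ, esymm n r (g.mulVec x) = esymm n r x))) ∧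
    (fun x : Fin n → ℂ => esymm n 1 x * esymm n (r - 1) x) ≠ esymm n r := by
  have hr1 : r - 1 + 1 = r := by omega
  refine ⟨fun g hg => ⟨fun hP => ?_, fun hE => ?_⟩, fun heq => ?_⟩
  · obtain ⟨μ, σ, hgμ⟩ := exists_perm_of_esymm_one_mul_esymm_mulVec (by omega) (by omega) hg hP
    simp only [hgμ] at hP ⊢
    rw [forall_esymm_smul_comp_perm_eq_iff hrn.le, ← hr1]
    exact (forall_esymm_one_mul_esymm_smul_comp_perm_eq_iff (by omega) (by omega)).1 hP
  · obtain ⟨μ, σ, hgμ⟩ :=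
      exists_perm_of_esymm_mulVec_eq_mul (a := 1) (by omega) hrn hg (by simpa using hE)
    simp only [hgμ] at hE ⊢
    rw [forall_esymm_one_mul_esymm_smul_comp_perm_eq_iff (by omega) (by omega), hr1]
    exact (forall_esymm_smul_comp_perm_eq_iff hrn.le).1 hE
  · have h1 := congrFun heq 1
    simp only [esymm_apply_one, Nat.choose_one_right] at h1
    exact (Nat.choose_lt_mul_choose_sub_one (by omega) hrn.le).ne' (by exact_mod_cast h1)
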